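/- arXiv:1504.00800 — 3 statements merged into one kernel-verified Lean document; each statement's English description precedes it below -/
import Mathlib

section
/- Let n ≥ 1, let A be an n×n nonnegative real matrix such that for all i, j either A_{ij} > 0 or A_{ji} > 0, define B by B_{ij} = max(A_{ij}, (A_{ji})^{-}) where t^{-} = 1/t if t > 0 and t^{-} = 0 otherwise, and let μ = λ(B). Let C be an n×n nonnegative real matrix with max_{1≤k≤n} max_i (C^{⊗k})_{ii} ≤ 1, and let θ = max( μ, max_{1≤k≤n−1} max_{(i_1,…,i_k) ∈ ℕ^k, 1 ≤ i_1+⋯+i_k ≤ n−k} ( max_i (B ⊗ C^{⊗i_1} ⊗ ⋯ ⊗ B ⊗ C^{⊗i_k})_{ii} )^{1/k} ). A positive vector x ∈ ℝ_{>0}^n satisfies both max_j C_{ij} x_j ≤ x_i for all i and ρ(A, x) = θ (i.e., x is a minimizer of the constrained problem) if and only if there exists a positive vector u ∈ ℝ_{>0}^n such that x = D^* ⊗ u, where D is the matrix with entries D_{ij} = max(θ^{-1} B_{ij}, C_{ij}). -/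
open scoped BigOperators

noncomputable section

/-- The max-times spectral radius (maximum geometric cycle mean) of a
nonnegative `n × n` real matrix. -/
def mtSpecRad {n : ℕ} (A : Matrix (Fin n) (Fin n) ℝ) : ℝ :=
  sSup { r : ℝ | ∃ (k : ℕ) (hk : 0 < k), k ≤ n ∧ ∃ f : Fin k → Fin n,
    r = (∏ t : Fin k, A (f t) (f ⟨((t : ℕ) + 1) % k, Nat.mod_lt _ hk⟩)) ^ ((k : ℝ)⁻¹) }

/-- The maximum cycle mean of a real `n × n` matrix (max-plus spectral radius). -/
def mpCycleMean {n : ℕ} (A : Matrix (Fin n) (Fin n) ℝ) : ℝ :=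
  sSup { r : ℝ | ∃ (k : ℕ) (hk : 0 < k), k ≤ n ∧ ∃ f : Fin k → Fin n,
    r = (∑ t : Fin k, A (f t) (f ⟨((t : ℕ) + 1) % k, Nat.mod_lt _ hk⟩)) / (k : ℝ) }

/-- Max-times matrix product. -/
def mtMul {n : ℕ} (A B : Matrix (Fin n) (Fin n) ℝ) : Matrix (Fin n) (Fin n) ℝ :=
  Matrix.of fun i j => ⨆ k : Fin n, A i k * B k j

/-- Max-times matrix powers, with `A^{⊗0} = I`. -/
def mtPow {n : ℕ} (A : Matrix (Fin n) (Fin n) ℝ) : ℕ → Matrix (Fin n) (Fin n) ℝ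
  | 0 => Matrix.of fun i j => if i = j then 1 else 0
  | (k + 1) => mtMul (mtPow A k) A

/-- Max-times Kleene star: entrywise maximum of `I, S, S^{⊗2}, …, S^{⊗(n-1)}`. -/
def mtStar {n : ℕ} (S : Matrix (Fin n) (Fin n) ℝ) : Matrix (Fin n) (Fin n) ℝ :=
  Matrix.of fun i j => ⨆ k : Fin n, mtPow S (k : ℕ) i j

/-- Max-times matrix-vector product. -/
def mtVecMul {n : ℕ} (S : Matrix (Fin n) (Fin n) ℝ) (u : Fin n → ℝ) : Fin n → ℝ :=
  fun i => ⨆ j, S i j * u j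

/-- Max-plus matrix product. -/
def mpMul {n : ℕ} (A B : Matrix (Fin n) (Fin n) ℝ) : Matrix (Fin n) (Fin n) ℝ :=
  Matrix.of fun i j => ⨆ k : Fin n, (A i k + B k j)

/-- `mpPow A k` is the max-plus power `A^{⊗(k+1)}`. -/
def mpPow {n : ℕ} (A : Matrix (Fin n) (Fin n) ℝ) : ℕ → Matrix (Fin n) (Fin n) ℝ
  | 0 => A
  | (k + 1) => mpMul (mpPow A k) A

/-- Max-plus Kleene star: `S^*_{ii} = max(0, max_{1≤k≤n-1} (S^{⊗k})_{ii})` and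
`S^*_{ij} = max_{1≤k≤n-1} (S^{⊗k})_{ij}` for `i ≠ j`. -/
def mpStar {n : ℕ} (S : Matrix (Fin n) (Fin n) ℝ) : Matrix (Fin n) (Fin n) ℝ :=
  Matrix.of fun i j =>
    if i = j then max 0 (⨆ k : Fin (n - 1), mpPow S (k : ℕ) i j)
    else ⨆ k : Fin (n - 1), mpPow S (k : ℕ) i j

/-- Max-plus matrix-vector product. -/
def mpVecMul {n : ℕ} (S : Matrix (Fin n) (Fin n) ℝ) (x : Fin n → ℝ) : Fin n → ℝ :=
  fun i => ⨆ j, (S i j + x j)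

/-- Chebyshev-like (max-times) distance between a nonnegative matrix `A` and the
rank-one reciprocal matrix with entries `x i / x j`. -/
def mtRho {n : ℕ} (A : Matrix (Fin n) (Fin n) ℝ) (x : Fin n → ℝ) : ℝ :=
  max (⨆ p : Fin n × Fin n, A p.1 p.2 * x p.2 / x p.1)
    (sSup { r : ℝ | ∃ i j, 0 < A i j ∧ r = x i / (A i j * x j) })

/-- The alternating max-times product `A ⊗ C^{⊗ i₁} ⊗ A ⊗ C^{⊗ i₂} ⊗ ⋯ ⊗ A ⊗ C^{⊗ i_k}`. -/
def mtChain {n : ℕ} (A C : Matrix (Fin n) (Fin n) ℝ) :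
    (k : ℕ) → (Fin k → ℕ) → Matrix (Fin n) (Fin n) ℝ
  | 0, _ => Matrix.of fun i j => if i = j then 1 else 0
  | (k + 1), f => mtMul (mtMul A (mtPow C (f 0))) (mtChain A C k (fun t => f t.succ))

/-- The optimal value `θ` of the constrained max-times approximation problem. -/
def mtTheta {n : ℕ} (A C : Matrix (Fin n) (Fin n) ℝ) : ℝ :=
  max (mtSpecRad A)
    (sSup { r : ℝ | ∃ k : ℕ, 0 < k ∧ k ≤ n - 1 ∧ ∃ f : Fin k → ℕ,
      1 ≤ ∑ t, f t ∧ (∑ t, f t) ≤ n - k ∧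
      r = (⨆ i, mtChain A C k f i i) ^ ((k : ℝ)⁻¹) })

/-!
For positive `x`, the bound `ρ(A, x) ≤ r` says exactly that `x` is a max-times subeigenvector,
`B ⊗ x ≤ r x`; hence `x` is feasible with `ρ(A, x) ≤ θ` iff `D ⊗ x ≤ x`. Such an `x` is fixed by
`D^*`, since `x ≤ D^* ⊗ x ≤ x`. Conversely, `D ⊗ (D^* ⊗ u) ≤ D^* ⊗ u` as soon as every cycle of `D`
has weight at most one. That holds because a cycle of `D` either uses only `C`-edges, or can be
rotated into a chain `θ⁻¹B C^{i₁} ⋯ θ⁻¹B C^{i_k}`, which `θ` bounds by its very definition. Finally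
`θ ≤ ρ(A, x)` for every feasible `x`: along a cycle the ratios `x i / x j` telescope, so the
subeigenvalue `ρ(A, x)` bounds every cycle mean of `B` and every chain.
-/

theorem le_ciSup_of_finite {ι : Type*} [Finite ι] (f : ι → ℝ) (i : ι) : f i ≤ ⨆ j, f j :=
  le_ciSup (Finite.bddAbove_range f) i

section MaxTimesAlgebra

variable {n : ℕ} {X Y Z S : Matrix (Fin n) (Fin n) ℝ}

theorem le_mtMul (X Y : Matrix (Fin n) (Fin n) ℝ) (i l j : Fin n) :
    X i l * Y l j ≤ mtMul X Y i j :=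
  le_ciSup_of_finite (fun l => X i l * Y l j) l

theorem mtMul_le [NeZero n] {a : ℝ} {i j : Fin n} (h : ∀ l, X i l * Y l j ≤ a) :
    mtMul X Y i j ≤ a :=
  ciSup_le h

theorem exists_mtMul_eq [NeZero n] (X Y : Matrix (Fin n) (Fin n) ℝ) (i j : Fin n) :
    ∃ l, mtMul X Y i j = X i l * Y l j := by
  obtain ⟨l, hl⟩ := exists_eq_ciSup_of_finite (f := fun l => X i l * Y l j)
  exact ⟨l, hl.symm⟩

theorem mtMul_nonneg [NeZero n] (hX : ∀ i j, 0 ≤ X i j) (hY : ∀ i j, 0 ≤ Y i j)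
    (i j : Fin n) : 0 ≤ mtMul X Y i j :=
  (mul_nonneg (hX i 0) (hY 0 j)).trans (le_mtMul X Y i 0 j)

theorem mtMul_assoc [NeZero n] (hX : ∀ i j, 0 ≤ X i j) (hZ : ∀ i j, 0 ≤ Z i j) :
    mtMul (mtMul X Y) Z = mtMul X (mtMul Y Z) := by
  ext i j
  refine le_antisymm (mtMul_le fun l => ?_) (mtMul_le fun m => ?_)
  · obtain ⟨m, hm⟩ := exists_mtMul_eq X Y i l
    calc mtMul X Y i l * Z l j = X i m * (Y m l * Z l j) := by rw [hm, mul_assoc]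
      _ ≤ X i m * mtMul Y Z m j := by gcongr; exacts [hX i m, le_mtMul Y Z m l j]
      _ ≤ _ := le_mtMul X _ i m j
  · obtain ⟨l, hl⟩ := exists_mtMul_eq Y Z m j
    calc X i m * mtMul Y Z m j = X i m * Y m l * Z l j := by rw [hl, mul_assoc]
      _ ≤ mtMul X Y i l * Z l j := by gcongr; exacts [hZ l j, le_mtMul X Y i m l]
      _ ≤ _ := le_mtMul _ Z i l j

theorem one_mtMul [NeZero n] (hX : ∀ i j, 0 ≤ X i j) : mtMul 1 X = X := by
  ext i j
  refine le_antisymm (mtMul_le fun l => ?_) ?_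
  · rcases eq_or_ne i l with rfl | h
    · simp
    · simp [Matrix.one_apply_ne h, hX i j]
  · simpa using le_mtMul 1 X i i j

theorem mtMul_one [NeZero n] (hX : ∀ i j, 0 ≤ X i j) : mtMul X 1 = X := by
  ext i j
  refine le_antisymm (mtMul_le fun l => ?_) ?_
  · rcases eq_or_ne l j with rfl | h
    · simp
    · simp [Matrix.one_apply_ne h, hX i j]
  · simpa using le_mtMul X 1 i j j

theorem smul_mtMul {c : ℝ} (hc : 0 ≤ c) (X Y : Matrix (Fin n) (Fin n) ℝ) :
    mtMul (c • X) Y = c • mtMul X Y := by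
  ext i j
  simp only [mtMul, Matrix.of_apply, Matrix.smul_apply, smul_eq_mul, Real.mul_iSup_of_nonneg hc,
    mul_assoc]

theorem mtMul_smul {c : ℝ} (hc : 0 ≤ c) (X Y : Matrix (Fin n) (Fin n) ℝ) :
    mtMul X (c • Y) = c • mtMul X Y := by
  ext i j
  simp only [mtMul, Matrix.of_apply, Matrix.smul_apply, smul_eq_mul, Real.mul_iSup_of_nonneg hc,
    mul_left_comm c]

theorem exists_mtMul_diag_le_swap [NeZero n] (X Y : Matrix (Fin n) (Fin n) ℝ) (i : Fin n) :
    ∃ l, mtMul X Y i i ≤ mtMul Y X l l := by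
  obtain ⟨l, hl⟩ := exists_mtMul_eq X Y i i
  exact ⟨l, hl ▸ mul_comm (X i l) (Y l i) ▸ le_mtMul Y X l i l⟩

@[simp] theorem mtPow_zero (S : Matrix (Fin n) (Fin n) ℝ) : mtPow S 0 = 1 := by
  ext i j
  simp [mtPow, Matrix.one_apply]

theorem mtPow_succ (S : Matrix (Fin n) (Fin n) ℝ) (k : ℕ) :
    mtPow S (k + 1) = mtMul (mtPow S k) S := rfl

theorem mtPow_nonneg [NeZero n] (hS : ∀ i j, 0 ≤ S i j) (k : ℕ) (i j : Fin n) :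
    0 ≤ mtPow S k i j := by
  induction k generalizing i j with
  | zero => rw [mtPow_zero, Matrix.one_apply]; positivity
  | succ k ih => exact mtMul_nonneg ih hS i j

theorem mtPow_one [NeZero n] (hS : ∀ i j, 0 ≤ S i j) : mtPow S 1 = S := by
  rw [mtPow_succ, mtPow_zero, one_mtMul hS]

theorem mtPow_succ' [NeZero n] (hS : ∀ i j, 0 ≤ S i j) (k : ℕ) :
    mtPow S (k + 1) = mtMul S (mtPow S k) := by
  induction k with
  | zero => rw [mtPow_one hS, mtPow_zero, mtMul_one hS]
  | succ k ih =>
    calc mtPow S (k + 2) = mtMul (mtMul S (mtPow S k)) S := by rw [mtPow_succ, ih]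
      _ = mtMul S (mtPow S (k + 1)) := by rw [mtMul_assoc hS hS, mtPow_succ]

theorem mtPow_mul_mtPow_le [NeZero n] (hS : ∀ i j, 0 ≤ S i j) (a b : ℕ) (i l j : Fin n) :
    mtPow S a i l * mtPow S b l j ≤ mtPow S (a + b) i j := by
  induction b generalizing j with
  | zero =>
    rcases eq_or_ne l j with rfl | h
    · simp
    · simp [Matrix.one_apply_ne h, mtPow_nonneg hS]
  | succ b ih =>
    obtain ⟨m, hm⟩ := exists_mtMul_eq (mtPow S b) S l j
    rw [mtPow_succ, hm, ← mul_assoc, ← add_assoc, mtPow_succ]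
    calc mtPow S a i l * mtPow S b l m * S m j ≤ mtPow S (a + b) i m * S m j := by
          gcongr; exacts [hS m j, ih m]
      _ ≤ _ := le_mtMul _ S i m j

theorem mtPow_le_mtStar {k : ℕ} (hk : k < n) (i j : Fin n) :
    mtPow S k i j ≤ mtStar S i j :=
  le_ciSup_of_finite (fun m : Fin n => mtPow S m i j) ⟨k, hk⟩

theorem exists_mtStar_eq [NeZero n] (S : Matrix (Fin n) (Fin n) ℝ) (i j : Fin n) :
    ∃ k < n, mtStar S i j = mtPow S k i j := by
  obtain ⟨k, hk⟩ := exists_eq_ciSup_of_finite (f := fun m : Fin n => mtPow S m i j)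
  exact ⟨k, k.2, hk.symm⟩

@[simp] theorem mtChain_zero (P Q : Matrix (Fin n) (Fin n) ℝ) (f : Fin 0 → ℕ) :
    mtChain P Q 0 f = 1 := by
  ext i j
  simp [mtChain, Matrix.one_apply]

theorem mtChain_succ (P Q : Matrix (Fin n) (Fin n) ℝ) (k : ℕ) (f : Fin (k + 1) → ℕ) :
    mtChain P Q (k + 1) f = mtMul (mtMul P (mtPow Q (f 0))) (mtChain P Q k fun t => f t.succ) :=
  rfl

end MaxTimesAlgebra

section Paths

variable {n : ℕ} {S : Matrix (Fin n) (Fin n) ℝ}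

def pathWeight (S : Matrix (Fin n) (Fin n) ℝ) (p : ℕ → Fin n) (k : ℕ) : ℝ :=
  ∏ t ∈ Finset.range k, S (p t) (p (t + 1))

theorem pathWeight_nonneg (hS : ∀ i j, 0 ≤ S i j) (p : ℕ → Fin n) (k : ℕ) :
    0 ≤ pathWeight S p k :=
  Finset.prod_nonneg fun _ _ => hS _ _

theorem pathWeight_add (S : Matrix (Fin n) (Fin n) ℝ) (p : ℕ → Fin n) (a b : ℕ) :
    pathWeight S p (a + b) = pathWeight S p a * pathWeight S (fun t => p (a + t)) b := by
  simp only [pathWeight, Finset.prod_range_add, add_assoc]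

theorem pathWeight_le_mtPow (hS : ∀ i j, 0 ≤ S i j) (p : ℕ → Fin n) (k : ℕ) :
    pathWeight S p k ≤ mtPow S k (p 0) (p k) := by
  induction k with
  | zero => simp [pathWeight]
  | succ k ih =>
    calc pathWeight S p (k + 1) = pathWeight S p k * S (p k) (p (k + 1)) :=
          Finset.prod_range_succ _ _
      _ ≤ mtPow S k (p 0) (p k) * S (p k) (p (k + 1)) := by gcongr; exact hS _ _
      _ ≤ _ := le_mtMul _ S _ _ _

theorem exists_pathWeight_eq_mtPow [NeZero n] {k : ℕ} {i j : Fin n} (h : mtPow S k i j ≠ 0) :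
    ∃ p : ℕ → Fin n, p 0 = i ∧ p k = j ∧ pathWeight S p k = mtPow S k i j := by
  induction k generalizing j with
  | zero =>
    have hij : i = j := by
      by_contra hij
      simp [Matrix.one_apply_ne hij] at h
    exact ⟨fun _ => i, rfl, hij, by simp [pathWeight, hij]⟩
  | succ k ih =>
    obtain ⟨l, hl⟩ := exists_mtMul_eq (mtPow S k) S i j
    rw [mtPow_succ, hl] at h ⊢
    obtain ⟨p, hp0, hpk, hp⟩ := ih (left_ne_zero_of_mul h)
    have hpre : ∀ t ≤ k, Function.update p (k + 1) j t = p t := fun t ht =>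
      Function.update_of_ne (by omega) _ _
    refine ⟨Function.update p (k + 1) j, by simp [hp0], by simp, ?_⟩
    rw [pathWeight, Finset.prod_range_succ, hpre k le_rfl, Function.update_self, hpk, ← hp,
      pathWeight]
    congr 1
    refine Finset.prod_congr rfl fun t ht => ?_
    rw [Finset.mem_range] at ht
    rw [hpre t ht.le, hpre (t + 1) ht]

/-- The cycle-removal step: a path of length `n` repeats a vertex, and cutting out the cycle
between the two visits does not decrease its weight. -/
theorem mtPow_le_mtStar_of_diag_le_one [NeZero n] (hS : ∀ i j, 0 ≤ S i j)
    (hcyc : ∀ k, 1 ≤ k → k ≤ n → ∀ i, mtPow S k i i ≤ 1) (i j : Fin n) :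
    mtPow S n i j ≤ mtStar S i j := by
  by_cases h0 : mtPow S n i j = 0
  · rw [h0]
    exact (mtPow_nonneg hS 0 i j).trans (mtPow_le_mtStar (NeZero.pos n) i j)
  obtain ⟨p, rfl, rfl, hp⟩ := exists_pathWeight_eq_mtPow h0
  obtain ⟨a, b, hab, hpab⟩ :=
    Fintype.exists_ne_map_eq_of_card_lt (fun t : Fin (n + 1) => p t) (by simp)
  wlog hlt : a < b generalizing a b
  · exact this b a hab.symm hpab.symm (lt_of_le_of_ne (not_lt.mp hlt) hab.symm)
  have hb := b.isLt
  have hlt' : (a : ℕ) < b := hlt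
  obtain ⟨c, d, hc, hac, hn⟩ : ∃ c d, 1 ≤ c ∧ (a : ℕ) + c = b ∧ (b : ℕ) + d = n :=
    ⟨b - a, n - b, by omega, by omega, by omega⟩
  have hcycle := pathWeight_le_mtPow hS (fun t => p (a + t)) c
  have hsuf := pathWeight_le_mtPow hS (fun t => p (b + t)) d
  simp only [add_zero, hac, hn, ← hpab] at hcycle hsuf
  calc mtPow S n (p 0) (p n) = pathWeight S p (a + c + d) := by rw [hac, hn, hp]
    _ = pathWeight S p a * pathWeight S (fun t => p (a + t)) c *
          pathWeight S (fun t => p (b + t)) d := by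
        rw [pathWeight_add, pathWeight_add, hac]
    _ ≤ mtPow S a (p 0) (p a) * 1 * mtPow S d (p a) (p n) :=
        mul_le_mul (mul_le_mul (pathWeight_le_mtPow hS p a) (hcycle.trans (hcyc c hc (by omega) _))
          (pathWeight_nonneg hS _ _) (mtPow_nonneg hS _ _ _)) hsuf (pathWeight_nonneg hS _ _)
          (by simpa using mtPow_nonneg hS _ _ _)
    _ ≤ mtPow S (a + d) (p 0) (p n) := by rw [mul_one]; exact mtPow_mul_mtPow_le hS a d _ _ _
    _ ≤ mtStar S (p 0) (p n) := mtPow_le_mtStar (by omega) _ _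

theorem mul_mtStar_le_mtStar [NeZero n] (hS : ∀ i j, 0 ≤ S i j)
    (hcyc : ∀ k, 1 ≤ k → k ≤ n → ∀ i, mtPow S k i i ≤ 1) (i j l : Fin n) :
    S i j * mtStar S j l ≤ mtStar S i l := by
  obtain ⟨k, hk, hkeq⟩ := exists_mtStar_eq S j l
  have hle := mtPow_mul_mtPow_le hS 1 k i j l
  rw [mtPow_one hS, ← hkeq] at hle
  rcases (by omega : 1 + k < n ∨ 1 + k = n) with hlt | heq
  · exact hle.trans (mtPow_le_mtStar hlt i l)
  · exact hle.trans (heq ▸ mtPow_le_mtStar_of_diag_le_one hS hcyc i l)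

end Paths

section Subeigenvectors

variable {n : ℕ} {S X Y : Matrix (Fin n) (Fin n) ℝ} {r : ℝ} {x : Fin n → ℝ}

/-- The entrywise form of `S ⊗ x ≤ r x`. -/
def IsMtSubeigenvector (S : Matrix (Fin n) (Fin n) ℝ) (r : ℝ) (x : Fin n → ℝ) : Prop :=
  ∀ i j, S i j * x j ≤ r * x i

theorem isMtSubeigenvector_one_iff [NeZero n] :
    (∀ i, (⨆ j, S i j * x j) ≤ x i) ↔ IsMtSubeigenvector S 1 x := by
  simp only [IsMtSubeigenvector, one_mul]
  exact ⟨fun h i j => (le_ciSup_of_finite _ j).trans (h i), fun h i => ciSup_le (h i)⟩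

theorem IsMtSubeigenvector.mul [NeZero n] (hX : ∀ i j, 0 ≤ X i j) {a b : ℝ} (hb : 0 ≤ b)
    (hXx : IsMtSubeigenvector X a x) (hYx : IsMtSubeigenvector Y b x) :
    IsMtSubeigenvector (mtMul X Y) (a * b) x := by
  intro i j
  obtain ⟨l, hl⟩ := exists_mtMul_eq X Y i j
  calc mtMul X Y i j * x j = X i l * (Y l j * x j) := by rw [hl, mul_assoc]
    _ ≤ X i l * (b * x l) := mul_le_mul_of_nonneg_left (hYx l j) (hX i l)
    _ = b * (X i l * x l) := by ring
    _ ≤ b * (a * x i) := mul_le_mul_of_nonneg_left (hXx i l) hb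
    _ = a * b * x i := by ring

theorem IsMtSubeigenvector.pow [NeZero n] (hS : ∀ i j, 0 ≤ S i j) (hr : 0 ≤ r)
    (hx : ∀ i, 0 ≤ x i) (h : IsMtSubeigenvector S r x) (k : ℕ) :
    IsMtSubeigenvector (mtPow S k) (r ^ k) x := by
  induction k with
  | zero =>
    intro i j
    rcases eq_or_ne i j with rfl | hij
    · simp
    · simpa [Matrix.one_apply_ne hij] using hx i
  | succ k ih => exact pow_succ r k ▸ ih.mul (mtPow_nonneg hS k) hr h

theorem IsMtSubeigenvector.chain [NeZero n] {B C : Matrix (Fin n) (Fin n) ℝ}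
    (hB : ∀ i j, 0 ≤ B i j) (hC : ∀ i j, 0 ≤ C i j) (hr : 0 ≤ r) (hx : ∀ i, 0 ≤ x i)
    (hBx : IsMtSubeigenvector B r x) (hCx : IsMtSubeigenvector C 1 x) (k : ℕ) (f : Fin k → ℕ) :
    IsMtSubeigenvector (mtChain B C k f) (r ^ k) x := by
  induction k with
  | zero =>
    simpa using hCx.pow hC zero_le_one hx 0
  | succ k ih =>
    have hCf : IsMtSubeigenvector (mtPow C (f 0)) 1 x := by
      simpa using hCx.pow hC zero_le_one hx (f 0)
    have h := (hBx.mul hB zero_le_one hCf).mul (mtMul_nonneg hB (mtPow_nonneg hC _))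
      (pow_nonneg hr k) (ih fun t => f t.succ)
    rwa [mul_one, ← pow_succ'] at h

theorem mtVecMul_mtStar_of_isMtSubeigenvector [NeZero n] (hS : ∀ i j, 0 ≤ S i j)
    (hx : ∀ i, 0 ≤ x i) (h : IsMtSubeigenvector S 1 x) : mtVecMul (mtStar S) x = x := by
  funext i
  refine le_antisymm (ciSup_le fun j => ?_) ?_
  · obtain ⟨k, -, hk⟩ := exists_mtStar_eq S i j
    simpa [hk] using h.pow hS zero_le_one hx k i j
  · calc x i ≤ mtStar S i i * x i := by
          simpa using mul_le_mul_of_nonneg_right (mtPow_le_mtStar (NeZero.pos n) i i) (hx i)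
      _ ≤ mtVecMul (mtStar S) x i := le_ciSup_of_finite (fun j => mtStar S i j * x j) i

theorem isMtSubeigenvector_mtVecMul_mtStar [NeZero n] (hS : ∀ i j, 0 ≤ S i j)
    (hcyc : ∀ k, 1 ≤ k → k ≤ n → ∀ i, mtPow S k i i ≤ 1) {u : Fin n → ℝ} (hu : ∀ i, 0 ≤ u i) :
    IsMtSubeigenvector S 1 (mtVecMul (mtStar S) u) := by
  intro i j
  obtain ⟨l, hl⟩ := exists_eq_ciSup_of_finite (f := fun l => mtStar S j l * u l)
  calc S i j * mtVecMul (mtStar S) u j = S i j * mtStar S j l * u l := by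
        rw [mtVecMul, ← hl, mul_assoc]
    _ ≤ mtStar S i l * u l := by gcongr; exacts [hu l, mul_mtStar_le_mtStar hS hcyc i j l]
    _ ≤ 1 * mtVecMul (mtStar S) u i := by
        rw [one_mul]; exact le_ciSup_of_finite (fun l => mtStar S i l * u l) l

end Subeigenvectors

section SpectralRadius

variable {n : ℕ} {B : Matrix (Fin n) (Fin n) ℝ}

theorem bddAbove_cycleMeans (B : Matrix (Fin n) (Fin n) ℝ) :
    BddAbove { r : ℝ | ∃ (k : ℕ) (hk : 0 < k), k ≤ n ∧ ∃ f : Fin k → Fin n,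
      r = (∏ t : Fin k, B (f t) (f ⟨((t : ℕ) + 1) % k, Nat.mod_lt _ hk⟩)) ^ ((k : ℝ)⁻¹) } := by
  refine (Set.Finite.subset (Set.finite_iUnion fun k : Fin (n + 1) => Set.finite_iUnion
    fun hk : 0 < (k : ℕ) => Set.finite_range fun f : Fin k → Fin n =>
      (∏ t : Fin k, B (f t) (f ⟨((t : ℕ) + 1) % k, Nat.mod_lt _ hk⟩)) ^ ((k : ℝ)⁻¹)) ?_).bddAbove
  rintro r ⟨k, hk, hkn, f, rfl⟩
  simp only [Set.mem_iUnion, Set.mem_range]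
  exact ⟨⟨k, by omega⟩, hk, f, rfl⟩

theorem le_mtSpecRad {k : ℕ} (hk : 0 < k) (hkn : k ≤ n) (f : Fin k → Fin n) :
    (∏ t : Fin k, B (f t) (f ⟨((t : ℕ) + 1) % k, Nat.mod_lt _ hk⟩)) ^ ((k : ℝ)⁻¹) ≤
      mtSpecRad B :=
  le_csSup (bddAbove_cycleMeans B) ⟨k, hk, hkn, f, rfl⟩

theorem mtSpecRad_nonneg [NeZero n] (hB : ∀ i j, 0 ≤ B i j) : 0 ≤ mtSpecRad B :=
  (Real.rpow_nonneg (Finset.prod_nonneg fun _ _ => hB _ _) _).trans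
    (le_mtSpecRad one_pos (NeZero.pos n) fun _ => 0)

theorem mtPow_diag_le_mtSpecRad_pow [NeZero n] (hB : ∀ i j, 0 ≤ B i j) {k : ℕ} (hk : 0 < k)
    (hkn : k ≤ n) (i : Fin n) : mtPow B k i i ≤ mtSpecRad B ^ k := by
  by_cases h0 : mtPow B k i i = 0
  · rw [h0]
    exact pow_nonneg (mtSpecRad_nonneg hB) k
  obtain ⟨p, hp0, hpk, hp⟩ := exists_pathWeight_eq_mtPow h0
  have hcycle : ∏ t : Fin k, B (p t) (p (((t : ℕ) + 1) % k)) = pathWeight B p k := by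
    rw [Fin.prod_univ_eq_prod_range (fun t => B (p t) (p ((t + 1) % k))), pathWeight]
    refine Finset.prod_congr rfl fun t ht => ?_
    rcases (by simp at ht; omega : t + 1 < k ∨ t + 1 = k) with h | h
    · rw [Nat.mod_eq_of_lt h]
    · rw [h, Nat.mod_self, hp0, hpk]
  have hmean := le_mtSpecRad (B := B) hk hkn fun t => p t
  simp only [hcycle] at hmean
  have hP := pathWeight_nonneg hB p k
  rw [← hp]
  calc pathWeight B p k = (pathWeight B p k ^ (k : ℝ)⁻¹) ^ k :=
        (Real.rpow_inv_natCast_pow hP hk.ne').symm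
    _ ≤ mtSpecRad B ^ k := pow_le_pow_left₀ (Real.rpow_nonneg hP _) hmean k

theorem prod_comp_succ_mod {k : ℕ} (hk : 0 < k) (g : Fin k → ℝ) :
    ∏ t : Fin k, g ⟨((t : ℕ) + 1) % k, Nat.mod_lt _ hk⟩ = ∏ t, g t := by
  have : NeZero k := ⟨hk.ne'⟩
  refine (Finset.prod_congr rfl fun t _ => ?_).trans (Equiv.prod_comp (finRotate k) g)
  congr 1
  ext
  simp [finRotate_apply, Fin.val_add, Nat.add_mod]

theorem mtSpecRad_le_of_isMtSubeigenvector (hB : ∀ i j, 0 ≤ B i j) {r : ℝ}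
    {x : Fin n → ℝ} (hr : 0 ≤ r) (hx : ∀ i, 0 < x i) (h : IsMtSubeigenvector B r x) :
    mtSpecRad B ≤ r := by
  refine Real.sSup_le ?_ hr
  rintro _ ⟨k, hk, -, f, rfl⟩
  set next : Fin k → Fin k := fun t => ⟨((t : ℕ) + 1) % k, Nat.mod_lt _ hk⟩
  have hP : 0 ≤ ∏ t, B (f t) (f (next t)) := Finset.prod_nonneg fun _ _ => hB _ _
  have hX : 0 < ∏ t, x (f t) := Finset.prod_pos fun _ _ => hx _
  have hprod : (∏ t, B (f t) (f (next t))) ≤ r ^ k := by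
    refine le_of_mul_le_mul_right ?_ hX
    calc (∏ t, B (f t) (f (next t))) * ∏ t, x (f t)
        = ∏ t, B (f t) (f (next t)) * x (f (next t)) := by
          rw [Finset.prod_mul_distrib, prod_comp_succ_mod hk fun t => x (f t)]
      _ ≤ ∏ t, r * x (f t) :=
          Finset.prod_le_prod (fun _ _ => mul_nonneg (hB _ _) (hx _).le) fun _ _ => h _ _
      _ = r ^ k * ∏ t, x (f t) := by simp [Finset.prod_mul_distrib]
  calc (∏ t, B (f t) (f (next t))) ^ (k : ℝ)⁻¹ ≤ (r ^ k) ^ (k : ℝ)⁻¹ :=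
        Real.rpow_le_rpow hP hprod (by positivity)
    _ = r := Real.pow_rpow_inv_natCast hr hk.ne'

end SpectralRadius

section Chains

variable {n : ℕ} {P Q B C : Matrix (Fin n) (Fin n) ℝ}

theorem mtChain_nonneg [NeZero n] (hP : ∀ i j, 0 ≤ P i j) (hQ : ∀ i j, 0 ≤ Q i j) (k : ℕ)
    (f : Fin k → ℕ) (i j : Fin n) : 0 ≤ mtChain P Q k f i j := by
  induction k generalizing i j with
  | zero => rw [mtChain_zero, Matrix.one_apply]; positivity
  | succ k ih => exact mtMul_nonneg (mtMul_nonneg hP (mtPow_nonneg hQ _)) (ih _) i j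

theorem mtChain_smul {c : ℝ} (hc : 0 ≤ c) (k : ℕ) (f : Fin k → ℕ) :
    mtChain (c • P) Q k f = c ^ k • mtChain P Q k f := by
  induction k with
  | zero => simp
  | succ k ih =>
    rw [mtChain_succ, mtChain_succ, ih, smul_mtMul hc, smul_mtMul hc,
      mtMul_smul (pow_nonneg hc k), smul_smul, pow_succ']

theorem mtChain_fun_zero [NeZero n] (hP : ∀ i j, 0 ≤ P i j) (k : ℕ) :
    mtChain P Q k (fun _ => 0) = mtPow P k := by
  induction k with
  | zero => simp
  | succ k ih => rw [mtChain_succ, ih, mtPow_zero, mtMul_one hP, mtPow_succ' hP]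

def mtWord (P Q : Matrix (Fin n) (Fin n) ℝ) : List Bool → Matrix (Fin n) (Fin n) ℝ
  | [] => 1
  | b :: w => mtMul (if b then P else Q) (mtWord P Q w)

/-- The word of `mtChain P Q k f`, namely `P Q^{f 0} P Q^{f 1} ⋯ P Q^{f (k-1)}`. -/
def chainWord (f : List ℕ) : List Bool :=
  f.flatMap fun i => true :: List.replicate i false

theorem chainWord_cons (i : ℕ) (f : List ℕ) :
    chainWord (i :: f) = true :: (List.replicate i false ++ chainWord f) := by
  simp [chainWord]

theorem length_chainWord (f : List ℕ) : (chainWord f).length = f.length + f.sum := by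
  induction f with
  | nil => simp [chainWord]
  | cons i f ih => simp only [chainWord_cons, List.length_cons, List.length_append,
      List.length_replicate, ih, List.sum_cons]; ring

theorem exists_chainWord_eq (w : List Bool) : ∃ f, chainWord f = true :: w := by
  induction w with
  | nil => exact ⟨[0], rfl⟩
  | cons b w ih =>
    obtain ⟨f, hf⟩ := ih
    cases b with
    | true => exact ⟨0 :: f, by simp [chainWord_cons, hf]⟩
    | false =>
      obtain ⟨i, g, rfl⟩ : ∃ i g, f = i :: g := by
        rcases f with _ | ⟨i, g⟩
        · simp [chainWord] at hf
        · exact ⟨i, g, rfl⟩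
      rw [chainWord_cons, List.cons.injEq] at hf
      exact ⟨(i + 1) :: g, by rw [chainWord_cons, List.replicate_succ, List.cons_append, hf.2]⟩

theorem mtWord_nonneg [NeZero n] (hP : ∀ i j, 0 ≤ P i j) (hQ : ∀ i j, 0 ≤ Q i j)
    (w : List Bool) (i j : Fin n) : 0 ≤ mtWord P Q w i j := by
  induction w generalizing i j with
  | nil => rw [mtWord, Matrix.one_apply]; positivity
  | cons b w ih => exact mtMul_nonneg (by cases b <;> simpa) ih i j

theorem mtWord_append [NeZero n] (hP : ∀ i j, 0 ≤ P i j) (hQ : ∀ i j, 0 ≤ Q i j)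
    (w₁ w₂ : List Bool) : mtWord P Q (w₁ ++ w₂) = mtMul (mtWord P Q w₁) (mtWord P Q w₂) := by
  induction w₁ with
  | nil => exact (one_mtMul (mtWord_nonneg hP hQ w₂)).symm
  | cons b w ih =>
    rw [List.cons_append, mtWord, mtWord, ih,
      mtMul_assoc (by cases b <;> simpa) (mtWord_nonneg hP hQ w₂)]

theorem mtWord_replicate_false [NeZero n] (hQ : ∀ i j, 0 ≤ Q i j) (k : ℕ) :
    mtWord P Q (List.replicate k false) = mtPow Q k := by
  induction k with
  | zero => simp [mtWord]
  | succ k ih => rw [List.replicate_succ, mtWord, ih, mtPow_succ' hQ]; rfl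

theorem mtWord_chainWord [NeZero n] (hP : ∀ i j, 0 ≤ P i j) (hQ : ∀ i j, 0 ≤ Q i j) (k : ℕ)
    (f : Fin k → ℕ) : mtWord P Q (chainWord (List.ofFn f)) = mtChain P Q k f := by
  induction k with
  | zero => simp [chainWord, mtWord]
  | succ k ih =>
    rw [List.ofFn_succ, chainWord_cons, mtWord, if_pos rfl, mtWord_append hP hQ,
      mtWord_replicate_false hQ, ← mtMul_assoc hP (mtWord_nonneg hP hQ _), ih, mtChain_succ]

theorem exists_mtWord_rotate_ge [NeZero n] (hP : ∀ i j, 0 ≤ P i j) (hQ : ∀ i j, 0 ≤ Q i j)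
    (w₁ w₂ : List Bool) (i : Fin n) :
    ∃ l, mtWord P Q (w₁ ++ w₂) i i ≤ mtWord P Q (w₂ ++ w₁) l l := by
  rw [mtWord_append hP hQ, mtWord_append hP hQ]
  exact exists_mtMul_diag_le_swap _ _ i

theorem exists_mtWord_ge [NeZero n] {D : Matrix (Fin n) (Fin n) ℝ} (hD0 : ∀ i j, 0 ≤ D i j)
    (hD : ∀ i j, D i j ≤ max (P i j) (Q i j)) (k : ℕ) (i j : Fin n) :
    ∃ w : List Bool, w.length = k ∧ mtPow D k i j ≤ mtWord P Q w i j := by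
  induction k generalizing i with
  | zero => exact ⟨[], rfl, by simp [mtWord]⟩
  | succ k ih =>
    obtain ⟨l, hl⟩ := exists_mtMul_eq D (mtPow D k) i j
    obtain ⟨w, hw, hle⟩ := ih l
    obtain ⟨b, hb⟩ : ∃ b : Bool, D i l ≤ (if b then P else Q) i l := by
      rcases le_total (Q i l) (P i l) with h | h
      · exact ⟨true, by simpa [max_eq_left h] using hD i l⟩
      · exact ⟨false, by simpa [max_eq_right h] using hD i l⟩
    refine ⟨b :: w, by simp [hw], ?_⟩
    rw [mtPow_succ' hD0, hl]
    calc D i l * mtPow D k l j ≤ (if b then P else Q) i l * mtWord P Q w l j :=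
          mul_le_mul hb hle (mtPow_nonneg hD0 _ _ _) ((hD0 i l).trans hb)
      _ ≤ mtWord P Q (b :: w) i j := le_mtMul _ _ i l j

end Chains

section Theta

variable {n : ℕ} {B C : Matrix (Fin n) (Fin n) ℝ}

theorem bddAbove_chainMeans (B C : Matrix (Fin n) (Fin n) ℝ) :
    BddAbove { r : ℝ | ∃ k : ℕ, 0 < k ∧ k ≤ n - 1 ∧ ∃ f : Fin k → ℕ,
      1 ≤ ∑ t, f t ∧ (∑ t, f t) ≤ n - k ∧
      r = (⨆ i, mtChain B C k f i i) ^ ((k : ℝ)⁻¹) } := by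
  refine (Set.Finite.subset (Set.finite_iUnion fun k : Fin (n + 1) =>
    Set.finite_range fun g : Fin k → Fin (n + 1) =>
      (⨆ i, mtChain B C k (fun t => (g t : ℕ)) i i) ^ ((k : ℝ)⁻¹)) ?_).bddAbove
  rintro r ⟨k, -, hkn, f, -, hfn, rfl⟩
  simp only [Set.mem_iUnion, Set.mem_range]
  refine ⟨⟨k, by omega⟩, fun t => ⟨f t, ?_⟩, rfl⟩
  have := Finset.single_le_sum (fun t _ => Nat.zero_le (f t)) (Finset.mem_univ t)
  omega

theorem one_le_mtTheta [NeZero n] (hB : ∀ i j, 0 ≤ B i j) {i : Fin n} (hi : 1 ≤ B i i) :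
    1 ≤ mtTheta B C := by
  have hdiag := mtPow_diag_le_mtSpecRad_pow hB one_pos (NeZero.pos n) i
  rw [mtPow_one hB, pow_one] at hdiag
  exact hi.trans (hdiag.trans (le_max_left _ _))

theorem mtChain_diag_le_mtTheta_pow [NeZero n] (hB : ∀ i j, 0 ≤ B i j) (hC : ∀ i j, 0 ≤ C i j)
    {k : ℕ} (hk : 0 < k) (f : Fin k → ℕ) (hkf : k + ∑ t, f t ≤ n) (i : Fin n) :
    mtChain B C k f i i ≤ mtTheta B C ^ k := by
  rcases Nat.eq_zero_or_pos (∑ t, f t) with hf | hf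
  · obtain rfl : f = fun _ => 0 :=
      funext fun t => Finset.sum_eq_zero_iff.mp hf t (Finset.mem_univ t)
    rw [mtChain_fun_zero hB]
    exact (mtPow_diag_le_mtSpecRad_pow hB hk (by omega) i).trans
      (pow_le_pow_left₀ (mtSpecRad_nonneg hB) (le_max_left _ _) k)
  · set s := ⨆ i, mtChain B C k f i i
    have hs : 0 ≤ s :=
      (mtChain_nonneg hB hC k f i i).trans (le_ciSup_of_finite (fun i => mtChain B C k f i i) i)
    have hmean : s ^ (k : ℝ)⁻¹ ≤ mtTheta B C :=
      (le_csSup (bddAbove_chainMeans B C) ⟨k, hk, by omega, f, hf, by omega, rfl⟩).trans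
        (le_max_right _ _)
    calc mtChain B C k f i i ≤ s := le_ciSup_of_finite (fun i => mtChain B C k f i i) i
      _ = (s ^ (k : ℝ)⁻¹) ^ k := (Real.rpow_inv_natCast_pow hs hk.ne').symm
      _ ≤ mtTheta B C ^ k := pow_le_pow_left₀ (Real.rpow_nonneg hs _) hmean k

theorem mtTheta_le_of_isMtSubeigenvector [NeZero n] (hB : ∀ i j, 0 ≤ B i j)
    (hC : ∀ i j, 0 ≤ C i j) {r : ℝ} {x : Fin n → ℝ} (hr : 0 ≤ r) (hx : ∀ i, 0 < x i)
    (hBx : IsMtSubeigenvector B r x) (hCx : IsMtSubeigenvector C 1 x) : mtTheta B C ≤ r := by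
  refine max_le (mtSpecRad_le_of_isMtSubeigenvector hB hr hx hBx) (Real.sSup_le ?_ hr)
  rintro _ ⟨k, hk, -, f, -, -, rfl⟩
  have hchain := hBx.chain hB hC hr (fun i => (hx i).le) hCx k f
  have hs : (⨆ i, mtChain B C k f i i) ≤ r ^ k :=
    ciSup_le fun i => le_of_mul_le_mul_right (hchain i i) (hx i)
  have hs0 : 0 ≤ ⨆ i, mtChain B C k f i i :=
    (mtChain_nonneg hB hC k f 0 0).trans (le_ciSup_of_finite (fun i => mtChain B C k f i i) 0)
  calc (⨆ i, mtChain B C k f i i) ^ (k : ℝ)⁻¹ ≤ (r ^ k) ^ (k : ℝ)⁻¹ :=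
        Real.rpow_le_rpow hs0 hs (by positivity)
    _ = r := Real.pow_rpow_inv_natCast hr hk.ne'

theorem mtPow_diag_le_one_of_eq_max [NeZero n] (hB : ∀ i j, 0 ≤ B i j) (hC : ∀ i j, 0 ≤ C i j)
    (hCcyc : ∀ k, 1 ≤ k → k ≤ n → ∀ i, mtPow C k i i ≤ 1) (hθ : 0 < mtTheta B C)
    {D : Matrix (Fin n) (Fin n) ℝ} (hD : ∀ i j, D i j = max ((mtTheta B C)⁻¹ * B i j) (C i j)) :
    ∀ k, 1 ≤ k → k ≤ n → ∀ i, mtPow D k i i ≤ 1 := by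
  intro k hk hkn i
  set θ := mtTheta B C
  have hE : ∀ i j, 0 ≤ (θ⁻¹ • B) i j := fun i j => mul_nonneg (inv_nonneg.2 hθ.le) (hB i j)
  have hD0 : ∀ i j, 0 ≤ D i j := fun i j => hD i j ▸ (hC i j).trans (le_max_right _ _)
  obtain ⟨w, rfl, hDw⟩ :=
    exists_mtWord_ge (P := θ⁻¹ • B) (Q := C) hD0 (fun i j => by simp [hD i j]) k i i
  refine hDw.trans ?_
  by_cases htrue : true ∈ w
  · obtain ⟨w₁, w₂, rfl⟩ := List.append_of_mem htrue
    obtain ⟨l, hl⟩ := exists_mtWord_rotate_ge hE hC w₁ (true :: w₂) i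
    obtain ⟨f, hf⟩ := exists_chainWord_eq (w₂ ++ w₁)
    have hlen := length_chainWord f
    rw [hf] at hlen
    have hf0 : 0 < f.length := by
      rcases f with _ | ⟨a, f⟩
      · simp [chainWord] at hf
      · simp
    rw [List.cons_append, ← hf, ← List.ofFn_get f, mtWord_chainWord hE hC,
      mtChain_smul (inv_nonneg.2 hθ.le)] at hl
    have hsum : ∑ t, f.get t = f.sum := by rw [← List.sum_ofFn, List.ofFn_get]
    calc mtWord (θ⁻¹ • B) C (w₁ ++ true :: w₂) i i
        ≤ θ⁻¹ ^ f.length * mtChain B C f.length f.get l l := by simpa using hl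
      _ ≤ θ⁻¹ ^ f.length * θ ^ f.length := by
          gcongr
          refine mtChain_diag_le_mtTheta_pow hB hC hf0 f.get ?_ l
          simp only [List.length_append, List.length_cons] at hlen hkn
          omega
      _ = 1 := by rw [← mul_pow, inv_mul_cancel₀ hθ.ne', one_pow]
  · have hw : w = List.replicate w.length false :=
      List.eq_replicate_iff.2 ⟨rfl, fun b hb => by cases b <;> simp_all⟩
    rw [hw, mtWord_replicate_false hC]
    simpa using hCcyc _ hk (by simpa using hkn) i

end Theta

section Rho

variable {n : ℕ} {A B : Matrix (Fin n) (Fin n) ℝ} {x : Fin n → ℝ}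

theorem mul_div_le_mtRho (A : Matrix (Fin n) (Fin n) ℝ) (x : Fin n → ℝ) (i j : Fin n) :
    A i j * x j / x i ≤ mtRho A x :=
  (le_ciSup_of_finite (fun p : Fin n × Fin n => A p.1 p.2 * x p.2 / x p.1) (i, j)).trans
    (le_max_left _ _)

theorem div_mul_le_mtRho {i j : Fin n} (hij : 0 < A i j) : x i / (A i j * x j) ≤ mtRho A x := by
  have hbdd : BddAbove {r : ℝ | ∃ i j, 0 < A i j ∧ r = x i / (A i j * x j)} :=
    ((Set.finite_range fun p : Fin n × Fin n => x p.1 / (A p.1 p.2 * x p.2)).subset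
      (by rintro _ ⟨i, j, -, rfl⟩; exact ⟨(i, j), rfl⟩)).bddAbove
  exact (le_csSup hbdd ⟨i, j, hij, rfl⟩).trans (le_max_right _ _)

theorem mtRho_nonneg [NeZero n] (hA : ∀ i j, 0 ≤ A i j) (hx : ∀ i, 0 < x i) : 0 ≤ mtRho A x :=
  (div_nonneg (mul_nonneg (hA 0 0) (hx 0).le) (hx 0).le).trans (mul_div_le_mtRho A x 0 0)

theorem mtRho_le_iff [NeZero n] (hA : ∀ i j, 0 ≤ A i j)
    (hB : ∀ i j, B i j = max (A i j) (A j i)⁻¹) (hx : ∀ i, 0 < x i) {r : ℝ} (hr : 0 ≤ r) :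
    mtRho A x ≤ r ↔ IsMtSubeigenvector B r x := by
  constructor
  · intro h i j
    rw [hB, max_mul_of_nonneg _ _ (hx j).le]
    refine max_le ((div_le_iff₀ (hx i)).1 ((mul_div_le_mtRho A x i j).trans h)) ?_
    rcases (hA j i).eq_or_lt with h0 | hpos
    · rw [← h0, inv_zero, zero_mul]
      exact mul_nonneg hr (hx i).le
    · have hji := (div_le_iff₀ (mul_pos hpos (hx i))).1 ((div_mul_le_mtRho hpos).trans h)
      rw [inv_mul_le_iff₀ hpos]
      linarith
  · intro h
    refine max_le (ciSup_le fun p => ?_) (Real.sSup_le ?_ hr)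
    · rw [div_le_iff₀ (hx _)]
      exact (mul_le_mul_of_nonneg_right (hB p.1 p.2 ▸ le_max_left _ _) (hx _).le).trans (h _ _)
    · rintro _ ⟨i, j, hij, rfl⟩
      rw [div_le_iff₀ (mul_pos hij (hx j))]
      have hji := (mul_le_mul_of_nonneg_right (hB j i ▸ le_max_right _ _ : (A i j)⁻¹ ≤ B j i)
        (hx i).le).trans (h j i)
      rw [inv_mul_le_iff₀ hij] at hji
      linarith

end Rho

theorem one_le_max_inv_self {a : ℝ} (ha : 0 < a) : 1 ≤ max a a⁻¹ :=
  le_max_iff.2 ((le_total 1 a).imp id (one_le_inv₀ ha).2)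

theorem isMtSubeigenvector_max_iff {n : ℕ} {B C D : Matrix (Fin n) (Fin n) ℝ} {θ : ℝ}
    {x : Fin n → ℝ} (hθ : 0 < θ) (hx : ∀ i, 0 ≤ x i)
    (hD : ∀ i j, D i j = max (θ⁻¹ * B i j) (C i j)) :
    IsMtSubeigenvector D 1 x ↔ IsMtSubeigenvector C 1 x ∧ IsMtSubeigenvector B θ x := by
  simp only [IsMtSubeigenvector, hD, max_mul_of_nonneg _ _ (hx _), max_le_iff, forall_and,
    mul_assoc, inv_mul_le_iff₀ hθ, one_mul]
  exact and_comm

theorem mt_rho_constrained_minimizers_general {n : ℕ} (hn : 1 ≤ n) (A : Matrix (Fin n) (Fin n) ℝ)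
    (hA : ∀ i j, 0 ≤ A i j) (hAA : ∀ i j, 0 < A i j ∨ 0 < A j i)
    (B : Matrix (Fin n) (Fin n) ℝ) (hB : ∀ i j, B i j = max (A i j) (A j i)⁻¹)
    (C : Matrix (Fin n) (Fin n) ℝ) (hC : ∀ i j, 0 ≤ C i j)
    (hTr : ∀ k : ℕ, 1 ≤ k → k ≤ n → ∀ i, mtPow C k i i ≤ 1)
    (θ : ℝ) (hθ : θ = mtTheta B C)
    (D : Matrix (Fin n) (Fin n) ℝ) (hD : ∀ i j, D i j = max (θ⁻¹ * B i j) (C i j))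
    (x : Fin n → ℝ) (hx : ∀ i, 0 < x i) :
    ((∀ i, (⨆ j, C i j * x j) ≤ x i) ∧ mtRho A x = θ) ↔
      ∃ u : Fin n → ℝ, (∀ i, 0 < u i) ∧ x = mtVecMul (mtStar D) u := by
  have : NeZero n := ⟨by omega⟩
  subst hθ
  have hB0 : ∀ i j, 0 ≤ B i j := fun i j => hB i j ▸ (hA i j).trans (le_max_left _ _)
  have hθ0 : 0 < mtTheta B C := one_pos.trans_le <|
    one_le_mtTheta hB0 (i := 0) (hB 0 0 ▸ one_le_max_inv_self ((hAA 0 0).elim id id))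
  have hD0 : ∀ i j, 0 ≤ D i j := fun i j => hD i j ▸ (hC i j).trans (le_max_right _ _)
  have hDx := isMtSubeigenvector_max_iff hθ0 (fun i => (hx i).le) hD
  rw [isMtSubeigenvector_one_iff]
  constructor
  · rintro ⟨hCx, hρ⟩
    have hBx := (mtRho_le_iff hA hB hx hθ0.le).1 hρ.le
    exact ⟨x, hx, (mtVecMul_mtStar_of_isMtSubeigenvector hD0 (fun i => (hx i).le)
      (hDx.2 ⟨hCx, hBx⟩)).symm⟩
  · rintro ⟨u, hu, rfl⟩
    have hDcyc := mtPow_diag_le_one_of_eq_max hB0 hC hTr hθ0 hD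
    obtain ⟨hCx, hBx⟩ := hDx.1 (isMtSubeigenvector_mtVecMul_mtStar hD0 hDcyc fun i => (hu i).le)
    have hρ0 := mtRho_nonneg hA hx
    refine ⟨hCx, le_antisymm ((mtRho_le_iff hA hB hx hθ0.le).2 hBx) ?_⟩
    exact mtTheta_le_of_isMtSubeigenvector hB0 hC hρ0 hx
      ((mtRho_le_iff hA hB hx hρ0).1 le_rfl) hCx

/-- A positive vector `x` satisfies `C ⊗ x ≤ x` and `ρ(A, x) = θ`
(i.e. is a minimizer of the constrained problem) iff `x = D^* ⊗ u` for some positive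
`u`, where `D_{ij} = max(θ⁻¹ B_{ij}, C_{ij})`, `B_{ij} = max(A_{ij}, (A_{ji})⁻)`. -/
theorem mt_rho_constrained_minimizers {n : ℕ} (hn : 1 ≤ n) (A : Matrix (Fin n) (Fin n) ℝ)
    (hA : ∀ i j, 0 ≤ A i j) (hAA : ∀ i j, 0 < A i j ∨ 0 < A j i)
    (B : Matrix (Fin n) (Fin n) ℝ) (hB : ∀ i j, B i j = max (A i j) (A j i)⁻¹)
    (μ : ℝ) (hμ : μ = mtSpecRad B)
    (C : Matrix (Fin n) (Fin n) ℝ) (hC : ∀ i j, 0 ≤ C i j)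
    (hTr : ∀ k : ℕ, 1 ≤ k → k ≤ n → ∀ i, mtPow C k i i ≤ 1)
    (θ : ℝ) (hθ : θ = mtTheta B C)
    (D : Matrix (Fin n) (Fin n) ℝ) (hD : ∀ i j, D i j = max (θ⁻¹ * B i j) (C i j))
    (x : Fin n → ℝ) (hx : ∀ i, 0 < x i) :
    ((∀ i, (⨆ j, C i j * x j) ≤ x i) ∧ mtRho A x = θ) ↔
      ∃ u : Fin n → ℝ, (∀ i, 0 < u i) ∧ x = mtVecMul (mtStar D) u :=
  mt_rho_constrained_minimizers_general hn A hA hAA B hB C hC hTr θ hθ D hD x hx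

end
end

section
/- Let n ≥ 1 and let A be an n×n real matrix with all entries positive. If λ ≥ 0 and x ∈ ℝ^n is a nonzero nonnegative vector such that max_j A_{ij} x_j = λ x_i for every i, then λ = λ(A), the max-times spectral radius of A. In particular, a matrix with all entries positive has exactly one max-times eigenvalue. -/
open scoped BigOperators

noncomputable section

/-! A positive eigenvector gives `A i j * x j ≤ λ * x i`, so the product of the entries of `A`
along any cycle of length `k` is at most `λ ^ k`: the ratios `x i / x j` telescope around the
cycle. Choosing in each row a column where the maximum is attained gives a self-map of the
indices, and along one of its cycles every inequality is an equality, so the product is exactly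
`λ ^ k`. Hence `λ` is the largest geometric cycle mean. -/

open Finset Function

lemma finRotate_apply_eq_mod {k : ℕ} (hk : 0 < k) (t : Fin k) :
    finRotate k t = ⟨((t : ℕ) + 1) % k, Nat.mod_lt _ hk⟩ := by
  obtain ⟨k, rfl⟩ := Nat.exists_eq_add_one_of_ne_zero hk.ne'
  ext
  simp [Fin.val_add]

lemma mtSpecRad_eq_sSup_finRotate {n : ℕ} (A : Matrix (Fin n) (Fin n) ℝ) :
    mtSpecRad A = sSup {r : ℝ | ∃ k, 0 < k ∧ k ≤ n ∧ ∃ f : Fin k → Fin n,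
      r = (∏ t, A (f t) (f (finRotate k t))) ^ ((k : ℝ)⁻¹)} := by
  unfold mtSpecRad
  congr 1; ext r
  constructor
  · rintro ⟨k, hk, hkn, f, rfl⟩
    exact ⟨k, hk, hkn, f, by simp only [finRotate_apply_eq_mod hk]⟩
  · rintro ⟨k, hk, hkn, f, rfl⟩
    exact ⟨k, hk, hkn, f, by simp only [finRotate_apply_eq_mod hk]⟩

lemma Function.exists_iterate_mem_periodicPts {α : Type*} [Finite α] (f : α → α) (x : α) :
    ∃ m, f^[m] x ∈ periodicPts f := by
  obtain ⟨a, b, hab, h⟩ := Finite.exists_ne_map_eq_of_infinite (fun m => f^[m] x)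
  wlog hlt : a < b generalizing a b
  · exact this b a (Ne.symm hab) h.symm (by omega)
  refine ⟨a, b - a, by omega, ?_⟩
  rw [IsPeriodicPt, IsFixedPt, ← iterate_add_apply, Nat.sub_add_cancel hlt.le]
  exact h.symm

lemma Function.iterate_finRotate_minimalPeriod {α : Type*} {σ : α → α} {p : α}
    (t : Fin (minimalPeriod σ p)) :
    σ^[finRotate _ t] p = σ (σ^[t] p) := by
  rw [finRotate_apply_eq_mod t.pos, iterate_mod_minimalPeriod_eq, iterate_succ_apply']

lemma prod_mul_div_finRotate {K : Type*} [CommGroupWithZero K] {k : ℕ} (c : K) {y : Fin k → K}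
    (hy : ∀ t, y t ≠ 0) :
    ∏ t, c * y t / y (finRotate k t) = c ^ k := by
  rw [prod_div_distrib, prod_mul_distrib, prod_const, card_fin, Equiv.prod_comp (finRotate k) y,
    mul_div_assoc, div_self (prod_ne_zero_iff.mpr fun t _ => hy t), mul_one]

section Cycle

variable {ι K : Type*} {A : ι → ι → K} {x : ι → K} {lam : K} {k : ℕ}

lemma prod_cycle_eq_pow [Field K] (hx : ∀ i, x i ≠ 0) (f : Fin k → ι)
    (hf : ∀ t, A (f t) (f (finRotate k t)) * x (f (finRotate k t)) = lam * x (f t)) :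
    ∏ t, A (f t) (f (finRotate k t)) = lam ^ k := by
  rw [← prod_mul_div_finRotate lam fun t => hx (f t)]
  exact prod_congr rfl fun t _ => eq_div_of_mul_eq (hx _) (hf t)

lemma prod_cycle_le_pow [Field K] [LinearOrder K] [IsStrictOrderedRing K]
    (hA : ∀ i j, 0 ≤ A i j) (hx : ∀ i, 0 < x i) (hsub : ∀ i j, A i j * x j ≤ lam * x i)
    (f : Fin k → ι) :
    ∏ t, A (f t) (f (finRotate k t)) ≤ lam ^ k := by
  rw [← prod_mul_div_finRotate lam fun t => (hx (f t)).ne']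
  exact prod_le_prod (fun t _ => hA _ _) fun t _ => (le_div_iff₀ (hx _)).mpr (hsub _ _)

end Cycle

section Eigenvector

variable {ι : Type*} [Finite ι] {A : ι → ι → ℝ} {x : ι → ℝ} {lam : ℝ}

lemma mul_le_of_iSup_mul_eq (heig : ∀ i, (⨆ j, A i j * x j) = lam * x i) (i j : ι) :
    A i j * x j ≤ lam * x i :=
  heig i ▸ le_ciSup (f := fun j => A i j * x j) (Set.finite_range _).bddAbove j

lemma exists_mul_eq_of_iSup_mul_eq [Nonempty ι] (heig : ∀ i, (⨆ j, A i j * x j) = lam * x i)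
    (i : ι) : ∃ j, A i j * x j = lam * x i :=
  heig i ▸ exists_eq_ciSup_of_finite

lemma pos_of_iSup_mul_eq (hA : ∀ i j, 0 < A i j) (hx : ∀ i, 0 ≤ x i) (hx0 : x ≠ 0)
    (heig : ∀ i, (⨆ j, A i j * x j) = lam * x i) (i : ι) :
    0 < x i := by
  obtain ⟨j, hj⟩ := Function.ne_iff.mp hx0
  have : 0 < lam * x i :=
    (mul_pos (hA i j) ((hx j).lt_of_ne' hj)).trans_le (mul_le_of_iSup_mul_eq heig i j)
  exact (hx i).lt_of_ne' (by rintro h; simp [h] at this)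

end Eigenvector

theorem mt_eigenvalue_unique_general {n : ℕ} (A : Matrix (Fin n) (Fin n) ℝ)
    (hA : ∀ i j, 0 < A i j) (lam : ℝ) (hlam : 0 ≤ lam)
    (x : Fin n → ℝ) (hx : ∀ i, 0 ≤ x i) (hx0 : x ≠ 0)
    (heig : ∀ i, (⨆ j, A i j * x j) = lam * x i) :
    lam = mtSpecRad A := by
  have hxpos := pos_of_iSup_mul_eq hA hx hx0 heig
  obtain ⟨i₀, -⟩ := Function.ne_iff.mp hx0
  have : Nonempty (Fin n) := ⟨i₀⟩
  choose σ hσ using exists_mul_eq_of_iSup_mul_eq heig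
  obtain ⟨m, hm⟩ := σ.exists_iterate_mem_periodicPts i₀
  set p := σ^[m] i₀
  have hk := minimalPeriod_pos_of_mem_periodicPts hm
  have hcycle := prod_cycle_eq_pow (fun i => (hxpos i).ne')
    (fun t : Fin (minimalPeriod σ p) => σ^[t] p) fun t => by
      simp only [iterate_finRotate_minimalPeriod]; exact hσ _
  rw [mtSpecRad_eq_sSup_finRotate]
  refine (IsGreatest.csSup_eq ⟨?_, ?_⟩).symm
  · refine ⟨_, hk, minimalPeriod_le_card.trans_eq (Fintype.card_fin n), fun t => σ^[t] p, ?_⟩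
    rw [hcycle, Real.pow_rpow_inv_natCast hlam hk.ne']
  · rintro r ⟨k, hk, -, f, rfl⟩
    rw [Real.rpow_inv_le_iff_of_pos (prod_nonneg fun t _ => (hA _ _).le) hlam (by positivity),
      Real.rpow_natCast]
    exact prod_cycle_le_pow (fun i j => (hA i j).le) hxpos (mul_le_of_iSup_mul_eq heig) f

/-- If `A` has all entries positive, `λ ≥ 0`, and `x` is a nonzero
nonnegative vector with `max_j A_{ij} x_j = λ x_i` for all `i`, then `λ` equals the
max-times spectral radius of `A`; in particular, a positive matrix has exactly one
max-times eigenvalue. -/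
theorem mt_eigenvalue_unique {n : ℕ} (hn : 1 ≤ n) (A : Matrix (Fin n) (Fin n) ℝ)
    (hA : ∀ i j, 0 < A i j) (lam : ℝ) (hlam : 0 ≤ lam)
    (x : Fin n → ℝ) (hx : ∀ i, 0 ≤ x i) (hx0 : x ≠ 0)
    (heig : ∀ i, (⨆ j, A i j * x j) = lam * x i) :
    lam = mtSpecRad A :=
  mt_eigenvalue_unique_general A hA lam hlam x hx hx0 heig

end
end

section
/- Let n ≥ 1, let A be an n×n real matrix with all entries positive, and let x ∈ ℝ_{>0}^n be a positive vector. Then max_{i,j} max( A_{ij} x_j / x_i , x_i / (A_{ij} x_j) ) = max_{i,j} max( A_{ij}, 1/A_{ji} ) · x_j / x_i; that is, the Chebyshev-like distance between A and the rank-one reciprocal matrix (x_i/x_j) equals the value of the quadratic form x^{-}(A ⊕ A^{-})x, where B_{ij} = max(A_{ij}, 1/A_{ji}). -/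
open scoped BigOperators

noncomputable section

/-! Since `x > 0`, the `(i, j)` term of the quadratic form splits as
`max (A i j * x j / x i) (x j / (A j i * x i))`. The second part is the reciprocal term of the
distance at the transposed pair `(j, i)`, so both sides are the maximum of the same two finite
families of ratios, one of them reindexed by `(i, j) ↦ (j, i)`. -/

theorem ciSup_max_comp_equiv {ι α : Type*} [Finite ι] [ConditionallyCompleteLinearOrder α]
    (f g : ι → α) (e : ι ≃ ι) :
    ⨆ i, max (f i) (g (e i)) = ⨆ i, max (f i) (g i) := by
  have hf := (Set.finite_range f).bddAbove
  rw [ciSup_sup_eq hf (Set.finite_range fun i => g (e i)).bddAbove,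
    ciSup_sup_eq hf (Set.finite_range g).bddAbove]
  exact congrArg _ (e.iSup_comp (g := g))

theorem max_inv_mul_div {K : Type*} [Field K] [LinearOrder K] [IsStrictOrderedRing K]
    {c d : K} (hc : 0 ≤ c) (hd : 0 ≤ d) (a b : K) :
    max a b⁻¹ * c / d = max (a * c / d) (c / (b * d)) := by
  rw [max_mul_of_nonneg _ _ hc, ← max_div_div_right hd]
  congr 1
  ring

theorem mt_rho_quad_form_general {n : ℕ} (A : Matrix (Fin n) (Fin n) ℝ)
    (x : Fin n → ℝ) (hx : ∀ i, 0 < x i) :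
    (⨆ p : Fin n × Fin n,
        max (A p.1 p.2 * x p.2 / x p.1) (x p.1 / (A p.1 p.2 * x p.2))) =
      ⨆ p : Fin n × Fin n, max (A p.1 p.2) (A p.2 p.1)⁻¹ * x p.2 / x p.1 := by
  calc _ = ⨆ p : Fin n × Fin n,
          max (A p.1 p.2 * x p.2 / x p.1) (x p.2 / (A p.2 p.1 * x p.1)) :=
        (ciSup_max_comp_equiv _ (fun p => x p.1 / (A p.1 p.2 * x p.2))
          (Equiv.prodComm _ _)).symm
    _ = _ := iSup_congr fun p => (max_inv_mul_div (hx _).le (hx _).le _ _).symm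

/-- For a positive matrix `A` and positive vector `x`, the Chebyshev-like
distance between `A` and the rank-one reciprocal matrix `(x_i/x_j)` equals the
max-times quadratic form `x⁻(A ⊕ A⁻)x`, where `B_{ij} = max(A_{ij}, 1/A_{ji})`. -/
theorem mt_rho_quad_form {n : ℕ} (hn : 1 ≤ n) (A : Matrix (Fin n) (Fin n) ℝ)
    (hA : ∀ i j, 0 < A i j) (x : Fin n → ℝ) (hx : ∀ i, 0 < x i) :
    (⨆ p : Fin n × Fin n,
        max (A p.1 p.2 * x p.2 / x p.1) (x p.1 / (A p.1 p.2 * x p.2))) =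
      ⨆ p : Fin n × Fin n, max (A p.1 p.2) (A p.2 p.1)⁻¹ * x p.2 / x p.1 :=
  mt_rho_quad_form_general A x hx

end
end
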